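/- arXiv:2605.00379 — 3 statements merged into one kernel-verified Lean document; each statement's English description precedes it below -/
import Mathlib

section
/- Let Φ be the standard normal CDF and let logit(x) = log(x) - log(1-x). For constants a > 0 and b ∈ ℝ, the function h(n) = logit(Φ(a·√n + b)) satisfies lim_{n→∞} dh/dn = a²/2. -/
open Filter Real

/-- Standard normal CDF. -/
noncomputable def stdNormalCDF (z : ℝ) : ℝ :=
  ∫ t in Set.Iic z, Real.exp (-t ^ 2 / 2) / Real.sqrt (2 * Real.pi)

/-- Logit function. -/
noncomputable def logit (x : ℝ) : ℝ := Real.log x - Real.log (1 - x)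

/-!
Write `g n = a √n + b`, `Φ` for the standard normal CDF and `φ` for its density. Since
`logit' x = 1 / (x (1 - x))`, the chain rule gives
`h' n = g' n φ(g n) / (Φ(g n) (1 - Φ(g n))) = g' n g n / (Φ(g n) · g n (1 - Φ(g n)) / φ(g n))`.
In the numerator `g' n g n = a² / 2 + a b / (2 √n) → a² / 2`; in the denominator `Φ(g n) → 1`,
and the Mills ratio satisfies `z (1 - Φ z) / φ z → 1`, by L'Hôpital's rule applied to
`1 - Φ z` and `φ z / z`, whose derivatives are `-φ z` and `-φ z (1 + z⁻²)`.
-/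

open MeasureTheory ProbabilityTheory Set Topology
open scoped NNReal

lemma hasDerivAt_logit {x : ℝ} (h₀ : x ≠ 0) (h₁ : x ≠ 1) :
    HasDerivAt logit (x * (1 - x))⁻¹ x := by
  have h₁' : 1 - x ≠ 0 := sub_ne_zero.2 h₁.symm
  have h : HasDerivAt (fun y => log y - log (1 - y)) (x⁻¹ - -1 / (1 - x)) x :=
    (hasDerivAt_log h₀).sub (((hasDerivAt_id x).const_sub 1).log h₁')
  exact h.congr_deriv (by field_simp; ring)

namespace ProbabilityTheory

lemma hasDerivAt_gaussianPDFReal (μ : ℝ) (v : ℝ≥0) (x : ℝ) :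
    HasDerivAt (gaussianPDFReal μ v) (-((x - μ) / v) * gaussianPDFReal μ v x) x := by
  have h : HasDerivAt (fun y => -(y - μ) ^ 2 / (2 * v)) (-(2 * (x - μ)) / (2 * v)) x := by
    simpa using (((hasDerivAt_id x).sub_const μ).pow 2).neg.div_const (2 * (v : ℝ))
  exact (h.exp.const_mul (√(2 * π * v))⁻¹).congr_deriv (by rw [gaussianPDFReal]; ring)

lemma tendsto_gaussianPDFReal_atTop (μ : ℝ) (v : ℝ≥0) :
    Tendsto (gaussianPDFReal μ v) atTop (𝓝 0) := by
  rcases eq_or_ne v 0 with rfl | hv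
  · rw [gaussianPDFReal_zero_var]
    exact tendsto_const_nhds
  have hsq : Tendsto (fun x => (x - μ) ^ 2) atTop atTop :=
    (tendsto_pow_atTop two_ne_zero).comp (tendsto_atTop_add_const_right _ (-μ) tendsto_id)
  have hexp : Tendsto (fun x => -(x - μ) ^ 2 / (2 * v)) atTop atBot :=
    (tendsto_neg_atTop_atBot.comp hsq).atBot_div_const (by positivity)
  rw [gaussianPDFReal_def]
  simpa using (tendsto_exp_atBot.comp hexp).const_mul (√(2 * π * v))⁻¹

section cdf

variable {μ : ℝ} {v : ℝ≥0}

lemma cdf_gaussianReal_eq_integral (hv : v ≠ 0) (x : ℝ) :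
    cdf (gaussianReal μ v) x = ∫ t in Iic x, gaussianPDFReal μ v t := by
  rw [cdf_eq_real, measureReal_def, gaussianReal_apply_eq_integral _ hv,
    ENNReal.toReal_ofReal (setIntegral_nonneg measurableSet_Iic
      fun t _ => gaussianPDFReal_nonneg μ v t)]

lemma hasDerivAt_cdf_gaussianReal (hv : v ≠ 0) (x : ℝ) :
    HasDerivAt (cdf (gaussianReal μ v)) (gaussianPDFReal μ v x) x := by
  have hint := integrable_gaussianPDFReal μ v
  have hcont : Continuous (gaussianPDFReal μ v) := by
    rw [gaussianPDFReal_def]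
    fun_prop
  have hsplit : ∀ y, cdf (gaussianReal μ v) y
      = cdf (gaussianReal μ v) 0 + ∫ t in (0 : ℝ)..y, gaussianPDFReal μ v t := by
    intro y
    rw [← intervalIntegral.integral_Iic_sub_Iic hint.integrableOn hint.integrableOn,
      cdf_gaussianReal_eq_integral hv, cdf_gaussianReal_eq_integral hv]
    ring
  rw [funext hsplit]
  exact (intervalIntegral.integral_hasDerivAt_right hint.intervalIntegrable
    hcont.stronglyMeasurable.stronglyMeasurableAtFilter hcont.continuousAt).const_add _

lemma strictMono_cdf_gaussianReal (hv : v ≠ 0) : StrictMono (cdf (gaussianReal μ v)) :=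
  strictMono_of_hasDerivAt_pos (hasDerivAt_cdf_gaussianReal hv)
    (gaussianPDFReal_pos μ v · hv)

lemma cdf_gaussianReal_pos (hv : v ≠ 0) (x : ℝ) : 0 < cdf (gaussianReal μ v) x :=
  ((strictMono_cdf_gaussianReal hv).monotone.le_of_tendsto (tendsto_cdf_atBot _) (x - 1)).trans_lt
    (strictMono_cdf_gaussianReal hv (sub_one_lt x))

lemma cdf_gaussianReal_lt_one (hv : v ≠ 0) (x : ℝ) : cdf (gaussianReal μ v) x < 1 :=
  (strictMono_cdf_gaussianReal hv (lt_add_one x)).trans_le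
    ((strictMono_cdf_gaussianReal hv).monotone.ge_of_tendsto (tendsto_cdf_atTop _) (x + 1))

lemma _root_.HasDerivAt.logit_cdf_gaussianReal {f : ℝ → ℝ} {f' x : ℝ} (hv : v ≠ 0)
    (hf : HasDerivAt f f' x) :
    HasDerivAt (fun y => logit (cdf (gaussianReal μ v) (f y)))
      (f' * gaussianPDFReal μ v (f x)
        / (cdf (gaussianReal μ v) (f x) * (1 - cdf (gaussianReal μ v) (f x)))) x := by
  have hlogit := hasDerivAt_logit (cdf_gaussianReal_pos (μ := μ) hv (f x)).ne'
    (cdf_gaussianReal_lt_one hv (f x)).ne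
  refine (hlogit.comp x ((hasDerivAt_cdf_gaussianReal hv (f x)).comp x hf)).congr_deriv ?_
  ring

end cdf

lemma tendsto_one_sub_cdf_div_gaussianPDFReal_div_id :
    Tendsto (fun z => (1 - cdf (gaussianReal 0 1) z) / (gaussianPDFReal 0 1 z / z))
      atTop (𝓝 1) := by
  have htail : ∀ z, HasDerivAt (fun z => 1 - cdf (gaussianReal 0 1) z)
      (-gaussianPDFReal 0 1 z) z :=
    fun z => by simpa using (hasDerivAt_cdf_gaussianReal one_ne_zero z).const_sub 1
  have hmills : ∀ z, z ≠ 0 → HasDerivAt (fun z => gaussianPDFReal 0 1 z / z)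
      (-(gaussianPDFReal 0 1 z * (1 + (z ^ 2)⁻¹))) z := fun z hz =>
    ((hasDerivAt_gaussianPDFReal 0 1 z).div (hasDerivAt_id z) hz).congr_deriv (by
      simp only [id, NNReal.coe_one, sub_zero, div_one]
      field_simp
      ring)
  refine HasDerivAt.lhopital_zero_atTop (Eventually.of_forall htail)
    ((eventually_ne_atTop 0).mono hmills) ?_ ?_ ?_ ?_
  · filter_upwards [eventually_gt_atTop 0] with z hz
    exact neg_ne_zero.2 (mul_pos (gaussianPDFReal_pos 0 1 z one_ne_zero) (by positivity)).ne'
  · simpa using (tendsto_cdf_atTop (gaussianReal 0 1)).const_sub 1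
  · simpa using (tendsto_gaussianPDFReal_atTop 0 1).div_atTop tendsto_id
  · have h : Tendsto (fun z : ℝ => (1 + (z ^ 2)⁻¹)⁻¹) atTop (𝓝 1) := by
      simpa using ((tendsto_pow_atTop (α := ℝ) two_ne_zero).inv_tendsto_atTop.const_add 1).inv₀
        (by norm_num)
    refine h.congr' ?_
    filter_upwards [eventually_gt_atTop 0] with z hz
    have := gaussianPDFReal_pos 0 1 z one_ne_zero
    field_simp

end ProbabilityTheory

lemma stdNormalCDF_eq_cdf : stdNormalCDF = cdf (gaussianReal 0 1) := by
  ext z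
  rw [cdf_gaussianReal_eq_integral one_ne_zero, stdNormalCDF]
  congr with t
  simp only [gaussianPDFReal, NNReal.coe_one, mul_one, sub_zero]
  ring

theorem stmt_0 (a b : ℝ) (ha : 0 < a) :
    Tendsto (fun n : ℝ => deriv (fun n : ℝ => logit (stdNormalCDF (a * Real.sqrt n + b))) n)
      atTop (nhds (a ^ 2 / 2)) := by
  rw [stdNormalCDF_eq_cdf]
  set g : ℝ → ℝ := fun n => a * √n + b
  have hg : Tendsto g atTop atTop :=
    tendsto_atTop_add_const_right _ b (tendsto_sqrt_atTop.const_mul_atTop ha)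
  have hscale : Tendsto (fun n => a * (1 / (2 * √n)) * (a * √n + b)) atTop (𝓝 (a ^ 2 / 2)) := by
    have h : Tendsto (fun n => a ^ 2 / 2 + a * b / 2 * (√n)⁻¹) atTop (𝓝 (a ^ 2 / 2)) := by
      simpa using (tendsto_inv_atTop_zero.comp tendsto_sqrt_atTop).const_mul (a * b / 2)
        |>.const_add (a ^ 2 / 2)
    refine h.congr' ?_
    filter_upwards [eventually_gt_atTop 0] with n hn
    have := sqrt_pos.2 hn
    field_simp
  have hderiv : ∀ᶠ n in atTop, a * (1 / (2 * √n)) * g n / (cdf (gaussianReal 0 1) (g n) *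
      ((1 - cdf (gaussianReal 0 1) (g n)) / (gaussianPDFReal 0 1 (g n) / g n)))
      = deriv (fun n => logit (cdf (gaussianReal 0 1) (g n))) n := by
    filter_upwards [eventually_gt_atTop 0, hg.eventually_gt_atTop 0] with n hn hgn
    have hg' : HasDerivAt g (a * (1 / (2 * √n))) n :=
      ((hasDerivAt_sqrt hn.ne').const_mul a).add_const b
    rw [(hg'.logit_cdf_gaussianReal one_ne_zero).deriv]
    have := gaussianPDFReal_pos 0 1 (g n) one_ne_zero
    field_simp
  have hlim := hscale.div (((tendsto_cdf_atTop (gaussianReal 0 1)).comp hg).mul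
    (tendsto_one_sub_cdf_div_gaussianPDFReal_div_id.comp hg)) (by norm_num)
  rw [mul_one, div_one] at hlim
  exact hlim.congr' hderiv
end

section
/- Let Φ be the standard normal CDF and logit(x) = log(x) - log(1-x). For constants a > 0 and b ∈ ℝ, let h(m) = logit(Φ(a·m + b·√m)), viewed as a function of s = m². Then lim_{m→∞} (d/d(m²)) logit(Φ(a·m + b·√m)) = a²/2, i.e., lim_{s→∞} dh/ds = a²/2. -/
open Filter Real

open MeasureTheory Set

noncomputable def gpdf (t : ℝ) : ℝ := Real.exp (-t ^ 2 / 2) / Real.sqrt (2 * Real.pi)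

lemma gpdf_pos (t : ℝ) : 0 < gpdf t :=
  div_pos (Real.exp_pos _) (Real.sqrt_pos.2 (by positivity))

lemma continuous_gpdf : Continuous gpdf := by
  unfold gpdf
  fun_prop

lemma integrable_gpdf : Integrable gpdf := by
  have h := integrable_exp_neg_mul_sq (b := (1:ℝ)/2) (by norm_num)
  have : gpdf = fun t => (Real.sqrt (2*Real.pi))⁻¹ * Real.exp (-(1/2) * t^2) := by
    funext t; unfold gpdf; rw [div_eq_inv_mul]; ring_nf
  rw [this]
  exact h.const_mul _

lemma integral_gpdf : ∫ t, gpdf t = 1 := by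
  have h := integral_gaussian ((1:ℝ)/2)
  have e : gpdf = fun t => (Real.sqrt (2*Real.pi))⁻¹ * Real.exp (-(1/2) * t^2) := by
    funext t; unfold gpdf; rw [div_eq_inv_mul]; ring_nf
  rw [e, MeasureTheory.integral_const_mul, h]
  rw [show Real.pi / (1/2) = 2 * Real.pi by ring]
  rw [inv_mul_cancel₀ (by positivity)]

lemma cdf_eq (z : ℝ) : stdNormalCDF z = ∫ t in Set.Iic z, gpdf t := rfl

noncomputable def Mtail (z : ℝ) : ℝ := ∫ t in Set.Ioi z, Real.exp (-t^2/2)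

lemma cdf_add_tail (z : ℝ) : stdNormalCDF z + Mtail z / Real.sqrt (2*Real.pi) = 1 := by
  have h1 : Mtail z / Real.sqrt (2*Real.pi) = ∫ t in Set.Ioi z, gpdf t := by
    unfold Mtail gpdf
    rw [eq_comm, MeasureTheory.integral_div]
  rw [cdf_eq, h1, ← integral_gpdf]
  exact intervalIntegral.integral_Iic_add_Ioi integrable_gpdf.integrableOn integrable_gpdf.integrableOn

lemma cdf_pos (z : ℝ) : 0 < stdNormalCDF z := by
  rw [cdf_eq]
  apply (setIntegral_pos_iff_support_of_nonneg_ae ?_ integrable_gpdf.integrableOn).2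
  · have : (Function.support gpdf) = Set.univ := by
      ext t; simp [Function.mem_support, (gpdf_pos t).ne']
    rw [this, Set.univ_inter]
    simp [Real.volume_Iic]
  · exact Filter.Eventually.of_forall fun t => (gpdf_pos t).le

lemma tail_pos (z : ℝ) : 0 < Mtail z := by
  unfold Mtail
  apply (setIntegral_pos_iff_support_of_nonneg_ae ?_ ?_).2
  · have : (Function.support fun t => Real.exp (-t^2/2)) = Set.univ := by
      ext t; simp [Function.mem_support, (Real.exp_pos _).ne']
    rw [this, Set.univ_inter]
    simp [Real.volume_Ioi]
  · exact Filter.Eventually.of_forall fun t => (Real.exp_pos _).le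
  · have : (fun t : ℝ => Real.exp (-t^2/2)) = fun t => Real.exp (-(1/2) * t^2) := by
      funext t; ring_nf
    rw [this]
    exact (integrable_exp_neg_mul_sq (by norm_num)).integrableOn

lemma cdf_lt_one (z : ℝ) : stdNormalCDF z < 1 := by
  have h := cdf_add_tail z
  nlinarith [tail_pos z, Real.sqrt_pos.2 (show (0:ℝ) < 2*Real.pi by positivity), div_pos (tail_pos z) (Real.sqrt_pos.2 (show (0:ℝ) < 2*Real.pi by positivity))]

lemma exp_sq_integrableOn (z : ℝ) : IntegrableOn (fun t : ℝ => Real.exp (-t^2/2)) (Set.Ioi z) := by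
  have : (fun t : ℝ => Real.exp (-t^2/2)) = fun t => Real.exp (-(1/2) * t^2) := by
    funext t; ring_nf
  rw [this]
  exact (integrable_exp_neg_mul_sq (by norm_num)).integrableOn

lemma exp_sq_tendsto : Tendsto (fun t : ℝ => Real.exp (-t^2/2)) atTop (nhds 0) := by
  apply Real.tendsto_exp_atBot.comp
  have h : Tendsto (fun t : ℝ => t^2/2) atTop atTop :=
    (tendsto_pow_atTop two_ne_zero).atTop_div_const (by norm_num)
  simpa [neg_div] using tendsto_neg_atBot_iff.2 h

lemma integral_mul_exp (z : ℝ) : ∫ t in Set.Ioi z, t * Real.exp (-t^2/2) = Real.exp (-z^2/2) := by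
  have hderiv : ∀ t ∈ Set.Ioi z, HasDerivAt (fun t : ℝ => -Real.exp (-t^2/2)) (t * Real.exp (-t^2/2)) t := by
    intro t _
    have h1 : HasDerivAt (fun t : ℝ => -t^2/2) (-t) t := by
      have := ((hasDerivAt_pow 2 t).neg).div_const 2
      simpa using this.congr_deriv (by ring)
    have h2 := (h1.exp).neg
    refine h2.congr_deriv ?_
    ring
  have hint : IntegrableOn (fun t : ℝ => t * Real.exp (-t^2/2)) (Set.Ioi z) := by
    have h := integrable_mul_exp_neg_mul_sq (b := (1:ℝ)/2) (by norm_num)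
    have : (fun t : ℝ => t * Real.exp (-t^2/2)) = fun t => t * Real.exp (-(1/2) * t^2) := by
      funext t; ring_nf
    rw [this]; exact h.integrableOn
  have htop : Tendsto (fun t : ℝ => -Real.exp (-t^2/2)) atTop (nhds 0) := by
    simpa using exp_sq_tendsto.neg
  have hcont : ContinuousWithinAt (fun t : ℝ => -Real.exp (-t^2/2)) (Set.Ici z) z := by
    apply Continuous.continuousWithinAt; fun_prop
  have := MeasureTheory.integral_Ioi_of_hasDerivAt_of_tendsto hcont hderiv hint htop
  rw [this]; ring

lemma tail_upper {z : ℝ} (hz : 0 < z) : Mtail z ≤ Real.exp (-z^2/2) / z := by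
  have hint : IntegrableOn (fun t : ℝ => t/z * Real.exp (-t^2/2)) (Set.Ioi z) := by
    have h := integrable_mul_exp_neg_mul_sq (b := (1:ℝ)/2) (by norm_num)
    have : (fun t : ℝ => t/z * Real.exp (-t^2/2)) = fun t => (1/z) * (t * Real.exp (-(1/2) * t^2)) := by
      funext t; ring_nf
    rw [this]; exact (h.const_mul _).integrableOn
  have hmono : Mtail z ≤ ∫ t in Set.Ioi z, t/z * Real.exp (-t^2/2) := by
    apply MeasureTheory.setIntegral_mono_on (exp_sq_integrableOn z) hint measurableSet_Ioi
    intro t ht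
    have h1 : (1:ℝ) ≤ t/z := (one_le_div hz).2 (le_of_lt ht)
    nlinarith [Real.exp_pos (-t^2/2)]
  calc Mtail z ≤ ∫ t in Set.Ioi z, t/z * Real.exp (-t^2/2) := hmono
    _ = (1/z) * ∫ t in Set.Ioi z, t * Real.exp (-t^2/2) := by
        rw [← MeasureTheory.integral_const_mul]; congr 1; funext t; ring
    _ = Real.exp (-z^2/2) / z := by rw [integral_mul_exp]; ring

noncomputable def millsg (t : ℝ) : ℝ := t / (t^2+1) * Real.exp (-t^2/2)

noncomputable def millsg' (t : ℝ) : ℝ :=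
  Real.exp (-t^2/2) * (1 - 2*t^2 - t^4) / (t^2+1)^2

lemma millsg_hasDeriv (t : ℝ) : HasDerivAt millsg (millsg' t) t := by
  have hden : (t^2+1 : ℝ) ≠ 0 := by positivity
  have h1 : HasDerivAt (fun t : ℝ => t / (t^2+1)) ((1*(t^2+1) - t*(2*t))/(t^2+1)^2) t := by
    exact (hasDerivAt_id t).div (by simpa using ((hasDerivAt_pow 2 t).add_const 1)) hden
  have h2 : HasDerivAt (fun t : ℝ => Real.exp (-t^2/2)) (Real.exp (-t^2/2) * (-t)) t := by
    have hq : HasDerivAt (fun t : ℝ => -t^2/2) (-t) t := by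
      have := ((hasDerivAt_pow 2 t).neg).div_const 2
      simpa using this.congr_deriv (by ring)
    exact hq.exp
  have := h1.mul h2
  refine this.congr_deriv ?_
  unfold millsg'
  field_simp
  ring

lemma millsg'_abs_le (t : ℝ) : |millsg' t| ≤ Real.exp (-t^2/2) := by
  unfold millsg'
  rw [abs_le]
  have he := Real.exp_pos (-t^2/2)
  have hd : (0:ℝ) < (t^2+1)^2 := by positivity
  constructor
  · rw [neg_le, ← neg_div, div_le_iff₀ hd]
    nlinarith
  · rw [div_le_iff₀ hd]
    nlinarith [mul_nonneg he.le (sq_nonneg t), mul_nonneg he.le (sq_nonneg (t^2))]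

lemma millsg'_integrableOn (z : ℝ) : IntegrableOn millsg' (Set.Ioi z) := by
  apply MeasureTheory.Integrable.mono' (exp_sq_integrableOn z)
  · apply Continuous.aestronglyMeasurable
    unfold millsg'
    apply Continuous.div
    · fun_prop
    · fun_prop
    · intro t; positivity
  · exact Filter.Eventually.of_forall fun t => millsg'_abs_le t

lemma millsg_tendsto : Tendsto millsg atTop (nhds 0) := by
  apply squeeze_zero' (g := fun t : ℝ => Real.exp (-t^2/2))
  · filter_upwards [eventually_ge_atTop (0:ℝ)] with t ht
    unfold millsg; positivity
  · filter_upwards [eventually_ge_atTop (0:ℝ)] with t ht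
    unfold millsg
    have h1 : t / (t^2+1) ≤ 1 := by
      rw [div_le_one (by positivity)]; nlinarith
    nlinarith [Real.exp_pos (-t^2/2)]
  · exact exp_sq_tendsto

lemma tail_lower {z : ℝ} (hz : 0 ≤ z) : millsg z ≤ Mtail z := by
  have hftc := MeasureTheory.integral_Ioi_of_hasDerivAt_of_tendsto
    (millsg_hasDeriv z).continuousAt.continuousWithinAt
    (fun t _ => millsg_hasDeriv t) (millsg'_integrableOn z) millsg_tendsto
  have h1 : ∫ t in Set.Ioi z, -millsg' t = millsg z := by
    rw [MeasureTheory.integral_neg, hftc]; ring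
  rw [← h1]
  apply MeasureTheory.setIntegral_mono_on ((millsg'_integrableOn z).neg) (exp_sq_integrableOn z) measurableSet_Ioi
  intro t _
  have := millsg'_abs_le t
  rw [abs_le] at this
  simp only [Pi.neg_apply]
  linarith [this.1]

lemma tail_tendsto_zero : Tendsto Mtail atTop (nhds 0) := by
  apply squeeze_zero' (g := fun z : ℝ => Real.exp (-z^2/2))
  · filter_upwards [eventually_gt_atTop (0:ℝ)] with z _
    exact (tail_pos z).le
  · filter_upwards [eventually_ge_atTop (1:ℝ)] with z hz
    calc Mtail z ≤ Real.exp (-z^2/2) / z := tail_upper (by linarith)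
      _ ≤ Real.exp (-z^2/2) := by
          rw [div_le_iff₀ (by linarith)]
          nlinarith [Real.exp_pos (-z^2/2)]
  · exact exp_sq_tendsto

lemma cdf_tendsto_one : Tendsto stdNormalCDF atTop (nhds 1) := by
  have h : stdNormalCDF = fun z => 1 - Mtail z / Real.sqrt (2*Real.pi) := by
    funext z; linarith [cdf_add_tail z]
  rw [h]
  have := (tail_tendsto_zero.div_const (Real.sqrt (2*Real.pi)))
  simpa using tendsto_const_nhds.sub this

lemma mills_ratio_tendsto :
    Tendsto (fun z : ℝ => z * Mtail z / Real.exp (-z^2/2)) atTop (nhds 1) := by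
  apply tendsto_of_tendsto_of_tendsto_of_le_of_le'
    (g := fun z : ℝ => z^2/(z^2+1)) (h := fun _ => (1:ℝ))
  · have h0 : Tendsto (fun z : ℝ => 1 - 1/(z^2+1)) atTop (nhds 1) := by
      have h1 : Tendsto (fun z : ℝ => 1/(z^2+1)) atTop (nhds 0) := by
        apply Tendsto.div_atTop (tendsto_const_nhds)
        have := tendsto_pow_atTop (n := 2) two_ne_zero (α := ℝ)
        exact tendsto_atTop_add_const_right _ 1 this
      simpa using tendsto_const_nhds.sub h1
    apply h0.congr'
    filter_upwards [eventually_gt_atTop (0:ℝ)] with z hz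
    field_simp
    ring
  · exact tendsto_const_nhds
  · filter_upwards [eventually_ge_atTop (1:ℝ)] with z hz
    have he := Real.exp_pos (-z^2/2)
    rw [div_le_div_iff₀ (by positivity) he]
    have h := tail_lower (z := z) (by linarith)
    unfold millsg at h
    have hz0 : (0:ℝ) < z := by linarith
    have h2 : z*(z^2+1) * (z/(z^2+1)*Real.exp (-z^2/2)) ≤ z*(z^2+1)*Mtail z :=
      mul_le_mul_of_nonneg_left h (by positivity)
    have h3 : z*(z^2+1) * (z/(z^2+1)*Real.exp (-z^2/2)) = z^2*Real.exp (-z^2/2) := by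
      field_simp
    rw [show z*Mtail z*(z^2+1) = z*(z^2+1)*Mtail z from by ring, ← h3]
    exact h2
  · filter_upwards [eventually_ge_atTop (1:ℝ)] with z hz
    have he := Real.exp_pos (-z^2/2)
    rw [div_le_one he]
    have h := tail_upper (z := z) (by linarith)
    calc z * Mtail z ≤ z * (Real.exp (-z^2/2)/z) := by
          apply mul_le_mul_of_nonneg_left h (by linarith)
      _ = Real.exp (-z^2/2) := by field_simp

lemma cdf_hasDeriv (z : ℝ) : HasDerivAt stdNormalCDF (gpdf z) z := by
  have heq : stdNormalCDF = fun w => stdNormalCDF 0 + ∫ t in (0:ℝ)..w, gpdf t := by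
    funext w
    rw [cdf_eq]
    have := intervalIntegral.integral_Iic_sub_Iic
      (integrable_gpdf.integrableOn (s := Set.Iic 0))
      (integrable_gpdf.integrableOn (s := Set.Iic w))
    rw [cdf_eq] at *
    linarith
  rw [heq]
  apply HasDerivAt.const_add
  exact intervalIntegral.integral_hasDerivAt_right
    (integrable_gpdf.intervalIntegrable)
    (continuous_gpdf.aestronglyMeasurable.stronglyMeasurableAtFilter)
    continuous_gpdf.continuousAt

lemma logit_hasDeriv {x : ℝ} (h0 : 0 < x) (h1 : x < 1) :
    HasDerivAt logit (1/x + 1/(1-x)) x := by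
  have hx1 : (1:ℝ) - x ≠ 0 := by linarith
  have h2 : HasDerivAt (fun x : ℝ => 1 - x) (-1) x := by
    exact (hasDerivAt_id x).const_sub 1
  have h3 : HasDerivAt (fun x : ℝ => Real.log (1 - x)) ((1-x)⁻¹ * (-1)) x :=
    (Real.hasDerivAt_log hx1).comp x h2
  have h4 := (Real.hasDerivAt_log h0.ne').sub h3
  unfold logit
  refine h4.congr_deriv ?_
  rw [one_div, one_div]
  ring

lemma sqrt_tendsto_atTop : Tendsto Real.sqrt atTop atTop := by
  apply tendsto_atTop_atTop.2
  intro c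
  refine ⟨(max c 0)^2, fun m hm => le_trans (le_max_left c 0) ?_⟩
  rw [← Real.sqrt_sq (le_max_right c 0)]
  exact Real.sqrt_le_sqrt hm

lemma u_tendsto {a b : ℝ} (ha : 0 < a) :
    Tendsto (fun m : ℝ => a * m + b * Real.sqrt m) atTop atTop := by
  have h1 : Tendsto (fun m : ℝ => Real.sqrt m * (a * Real.sqrt m + b)) atTop atTop := by
    apply Tendsto.atTop_mul_atTop₀ sqrt_tendsto_atTop
    exact tendsto_atTop_add_const_right _ b (sqrt_tendsto_atTop.const_mul_atTop ha)
  apply h1.congr'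
  filter_upwards [eventually_ge_atTop (0:ℝ)] with m hm
  rw [mul_add, ← mul_assoc, mul_comm (Real.sqrt m) a, mul_assoc, Real.mul_self_sqrt hm, mul_comm (Real.sqrt m) b]

lemma gpdf_tendsto_zero : Tendsto gpdf atTop (nhds 0) := by
  have h := exp_sq_tendsto.div_const (Real.sqrt (2*Real.pi))
  rw [zero_div] at h
  exact h

theorem stmt_2 (a b : ℝ) (ha : 0 < a) :
    Tendsto (fun m : ℝ =>
        deriv (fun m : ℝ => logit (stdNormalCDF (a * m + b * Real.sqrt m))) m / (2 * m))
      atTop (nhds (a ^ 2 / 2)) := by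
  set u : ℝ → ℝ := fun m => a * m + b * Real.sqrt m with hu_def
  have hU : Tendsto u atTop atTop := u_tendsto ha
  set c : ℝ → ℝ := fun m => a + b * (1/(2*Real.sqrt m)) with hc_def
  have hderiv : ∀ᶠ m in atTop, deriv (fun m : ℝ => logit (stdNormalCDF (u m))) m
      = (1/stdNormalCDF (u m) + 1/(1 - stdNormalCDF (u m))) * (gpdf (u m) * c m) := by
    filter_upwards [eventually_gt_atTop (0:ℝ)] with m hm
    have hum : HasDerivAt u (a * 1 + b * (1/(2*Real.sqrt m))) m :=
      ((hasDerivAt_id m).const_mul a).add ((Real.hasDerivAt_sqrt hm.ne').const_mul b)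
    have hcdf := (cdf_hasDeriv (u m)).comp m hum
    have hlog := (logit_hasDeriv (cdf_pos (u m)) (cdf_lt_one (u m))).comp m hcdf
    simp only [Function.comp_def] at hlog
    rw [hlog.deriv]
    simp only [hc_def]
    ring
  -- component limits
  have tg : Tendsto (fun m => gpdf (u m)) atTop (nhds 0) := gpdf_tendsto_zero.comp hU
  have tPhi : Tendsto (fun m => stdNormalCDF (u m)) atTop (nhds 1) := cdf_tendsto_one.comp hU
  have tc : Tendsto c atTop (nhds a) := by
    rw [hc_def]
    have h1 : Tendsto (fun m : ℝ => b * (1/(2*Real.sqrt m))) atTop (nhds 0) := by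
      have h2 : Tendsto (fun m : ℝ => (1:ℝ)/(2*Real.sqrt m)) atTop (nhds 0) :=
        Tendsto.div_atTop tendsto_const_nhds (sqrt_tendsto_atTop.const_mul_atTop two_pos)
      simpa using h2.const_mul b
    simpa using (tendsto_const_nhds (x := a) (f := atTop)).add h1
  have tc2 : Tendsto (fun m => c m / (2*m)) atTop (nhds 0) :=
    Tendsto.div_atTop tc (tendsto_id.const_mul_atTop two_pos)
  have t5 : Tendsto (fun m => u m / m) atTop (nhds a) := by
    have h1 : Tendsto (fun m : ℝ => a + b * (1/Real.sqrt m)) atTop (nhds a) := by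
      have h2 : Tendsto (fun m : ℝ => (1:ℝ)/Real.sqrt m) atTop (nhds 0) :=
        Tendsto.div_atTop tendsto_const_nhds sqrt_tendsto_atTop
      simpa using (tendsto_const_nhds (x := a) (f := atTop)).add (h2.const_mul b)
    apply h1.congr'
    filter_upwards [eventually_gt_atTop (0:ℝ)] with m hm
    have hs : Real.sqrt m > 0 := Real.sqrt_pos.2 hm
    have hms : Real.sqrt m * Real.sqrt m = m := Real.mul_self_sqrt hm.le
    simp only [hu_def]
    rw [show (1:ℝ)/Real.sqrt m = Real.sqrt m/m by
      rw [div_eq_div_iff hs.ne' hm.ne', one_mul, hms]]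
    field_simp
  have tR : Tendsto (fun m => u m * Mtail (u m) / Real.exp (-(u m)^2/2)) atTop (nhds 1) :=
    mills_ratio_tendsto.comp hU
  have T_A : Tendsto (fun m => gpdf (u m)/stdNormalCDF (u m) * (c m/(2*m))) atTop (nhds 0) := by
    have := (tg.div tPhi one_ne_zero).mul tc2
    simpa using this
  have T_B : Tendsto (fun m => ((u m / m) * c m / 2) / (u m * Mtail (u m) / Real.exp (-(u m)^2/2)))
      atTop (nhds (a * a / 2)) := by
    have := ((t5.mul tc).div_const 2).div tR one_ne_zero
    rwa [div_one] at this
  have Tsum := T_A.add T_B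
  rw [zero_add] at Tsum
  have hval : a * a / 2 = a^2/2 := by ring
  rw [hval] at Tsum
  apply Tsum.congr'
  filter_upwards [hderiv, eventually_gt_atTop (0:ℝ), hU.eventually (eventually_gt_atTop (0:ℝ))]
    with m hd hm hum
  rw [hd]
  have hPhi0 := cdf_pos (u m)
  have hPhi1 := cdf_lt_one (u m)
  have hM := tail_pos (u m)
  have hs : (0:ℝ) < Real.sqrt (2*Real.pi) := Real.sqrt_pos.2 (by positivity)
  have he := Real.exp_pos (-(u m)^2/2)
  have h1 : 1 - stdNormalCDF (u m) = Mtail (u m) / Real.sqrt (2*Real.pi) := by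
    linarith [cdf_add_tail (u m)]
  have hg : gpdf (u m) = Real.exp (-(u m)^2/2) / Real.sqrt (2*Real.pi) := by
    unfold gpdf; ring_nf
  rw [h1, hg]
  field_simp
end

section
/- Let Φ be the standard normal CDF and logit(x) = log(x) - log(1-x). For constants a_U > 0 > a_L and b_U, b_L ∈ ℝ, the function h(n) = logit(Φ(a_U√n + b_U) - Φ(a_L√n + b_L)) satisfies lim_{n→∞} dh/dn = (1/2)·min{a_U², a_L²}. -/
/-!
Write `s = √n`, `P = Φ(a_U s + b_U) - Φ(a_L s + b_L)`, `φ = Φ'` and `Q = 1 - Φ`. Since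
`logit' = 1 / (P (1 - P))` and `P → 1`, the derivative in `n` behaves like
`(a_U φ(U) + |a_L| φ(L)) / (2 s (Q(U) + Q(-L)))`. By Mills' ratio `Q(z) ~ φ(z) / z` (L'Hôpital),
`s Q(a s + b) ~ φ(a s + b) / a`, so the quotient is asymptotically a weighted mean of `a_U²` and
`a_L²` with weights `φ(U) / a_U` and `φ(L) / |a_L|`. When the slopes differ, the weight of the
steeper one is exponentially negligible, which leaves `min (a_U², a_L²)`.
-/

open Filter Real

open MeasureTheory Set Topology Asymptotics

noncomputable def stdNormalPDF (z : ℝ) : ℝ := exp (-z ^ 2 / 2) / √(2 * π)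

noncomputable def stdNormalTail (z : ℝ) : ℝ := ∫ t in Ioi z, stdNormalPDF t

lemma stdNormalCDF_eq_integral (z : ℝ) : stdNormalCDF z = ∫ t in Iic z, stdNormalPDF t := rfl

lemma stdNormalPDF_pos (z : ℝ) : 0 < stdNormalPDF z := by
  unfold stdNormalPDF; positivity

lemma stdNormalPDF_neg (z : ℝ) : stdNormalPDF (-z) = stdNormalPDF z := by
  simp [stdNormalPDF]

lemma continuous_stdNormalPDF : Continuous stdNormalPDF := by
  unfold stdNormalPDF; fun_prop

lemma hasDerivAt_stdNormalPDF (z : ℝ) : HasDerivAt stdNormalPDF (-z * stdNormalPDF z) z := by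
  have h : HasDerivAt (fun t : ℝ => -t ^ 2 / 2) (-z) z :=
    (((hasDerivAt_pow 2 z).neg).div_const 2).congr_deriv (by ring)
  exact (((Real.hasDerivAt_exp _).comp z h).div_const √(2 * π)).congr_deriv
    (by rw [stdNormalPDF]; ring)

lemma tendsto_stdNormalPDF_atTop : Tendsto stdNormalPDF atTop (𝓝 0) := by
  have h : Tendsto (fun z : ℝ => -z ^ 2 / 2) atTop atBot :=
    (tendsto_neg_atTop_atBot.comp (tendsto_pow_atTop two_ne_zero)).atBot_div_const two_pos
  rw [← zero_div √(2 * π)]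
  exact (Real.tendsto_exp_atBot.comp h).div_const √(2 * π)

lemma integrable_stdNormalPDF : Integrable stdNormalPDF :=
  ((integrable_exp_neg_mul_sq one_half_pos).div_const √(2 * π)).congr
    (ae_of_all _ fun t => by simp only [stdNormalPDF]; ring_nf)

lemma integral_stdNormalPDF : ∫ t, stdNormalPDF t = 1 := by
  have h : ∫ t : ℝ, exp (-t ^ 2 / 2) = √(2 * π) := by
    convert integral_gaussian (1 / 2) using 1
    · ring_nf
    · congr 1; field_simp
  simp only [stdNormalPDF, integral_div, h]
  exact div_self (by positivity)

lemma stdNormalCDF_add_stdNormalTail (z : ℝ) : stdNormalCDF z + stdNormalTail z = 1 :=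
  (intervalIntegral.integral_Iic_add_Ioi integrable_stdNormalPDF.integrableOn
    integrable_stdNormalPDF.integrableOn).trans integral_stdNormalPDF

lemma stdNormalCDF_eq_stdNormalTail_neg (z : ℝ) : stdNormalCDF z = stdNormalTail (-z) := by
  simp only [stdNormalCDF_eq_integral, stdNormalTail, ← integral_comp_neg_Iic, stdNormalPDF_neg]

lemma stdNormalTail_pos (z : ℝ) : 0 < stdNormalTail z := by
  rw [stdNormalTail, setIntegral_pos_iff_support_of_nonneg_ae
    (ae_of_all _ fun t => (stdNormalPDF_pos t).le) integrable_stdNormalPDF.integrableOn]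
  simp [Function.support_eq_univ (fun t => (stdNormalPDF_pos t).ne')]

lemma tendsto_stdNormalTail_atTop : Tendsto stdNormalTail atTop (𝓝 0) := by
  have h := tendsto_setIntegral_of_antitone (μ := volume) (f := stdNormalPDF)
    (fun z : ℝ => measurableSet_Ioi) (fun _ _ h => Ioi_subset_Ioi h)
    ⟨0, integrable_stdNormalPDF.integrableOn⟩
  have hempty : ⋂ z : ℝ, Ioi z = ∅ := iInter_eq_empty_iff.2 fun x => ⟨x, lt_irrefl x⟩
  rwa [hempty, Measure.restrict_empty, integral_zero_measure] at h

lemma hasDerivAt_stdNormalCDF (z : ℝ) : HasDerivAt stdNormalCDF (stdNormalPDF z) z := by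
  have h := intervalIntegral.integral_hasDerivAt_right integrable_stdNormalPDF.intervalIntegrable
    (continuous_stdNormalPDF.stronglyMeasurableAtFilter _ _) continuous_stdNormalPDF.continuousAt
    (a := 0) (b := z)
  refine (h.const_add (stdNormalCDF 0)).congr_of_eventuallyEq (Eventually.of_forall fun w => ?_)
  dsimp only
  rw [stdNormalCDF_eq_integral, stdNormalCDF_eq_integral,
    ← intervalIntegral.integral_Iic_sub_Iic integrable_stdNormalPDF.integrableOn
    integrable_stdNormalPDF.integrableOn]
  ring

lemma hasDerivAt_stdNormalTail (z : ℝ) : HasDerivAt stdNormalTail (-stdNormalPDF z) z := by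
  have h : stdNormalTail = fun w => 1 - stdNormalCDF w := by
    funext w; linarith [stdNormalCDF_add_stdNormalTail w]
  simpa [h] using (hasDerivAt_stdNormalCDF z).const_sub 1

lemma stdNormalTail_isEquivalent :
    stdNormalTail ~[atTop] fun z => stdNormalPDF z / z := by
  refine isEquivalent_of_tendsto_one ?_
  have hg : ∀ z, z ≠ 0 → HasDerivAt (fun z => stdNormalPDF z / z)
      (-stdNormalPDF z * ((z ^ 2 + 1) / z ^ 2)) z := fun z hz =>
    ((hasDerivAt_stdNormalPDF z).div (hasDerivAt_id z) hz).congr_deriv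
      (by simp only [id]; field_simp; ring)
  have hdiv : Tendsto (fun z : ℝ => -stdNormalPDF z / (-stdNormalPDF z * ((z ^ 2 + 1) / z ^ 2)))
      atTop (𝓝 1) := by
    have h : Tendsto (fun z : ℝ => (1 + (z ^ 2)⁻¹)⁻¹) atTop (𝓝 ((1 + 0)⁻¹)) :=
      ((tendsto_inv_atTop_zero.comp (tendsto_pow_atTop two_ne_zero)).const_add 1).inv₀
        (by norm_num)
    rw [add_zero, inv_one] at h
    refine h.congr' ?_
    filter_upwards [eventually_ne_atTop 0] with z hz
    have := (stdNormalPDF_pos z).ne'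
    field_simp
  exact HasDerivAt.lhopital_zero_atTop (Eventually.of_forall hasDerivAt_stdNormalTail)
    ((eventually_ne_atTop 0).mono hg) ((eventually_ne_atTop 0).mono fun z hz =>
      mul_ne_zero (neg_ne_zero.2 (stdNormalPDF_pos z).ne') (by positivity))
    tendsto_stdNormalTail_atTop
    (by simpa [div_eq_mul_inv] using tendsto_stdNormalPDF_atTop.mul tendsto_inv_atTop_zero) hdiv

lemma Asymptotics.IsEquivalent.add_add_of_eventually_nonneg {α : Type*} {u v t w : α → ℝ}
    {l : Filter α} (hv : ∀ᶠ x in l, 0 ≤ v x) (hw : ∀ᶠ x in l, 0 ≤ w x) (huv : u ~[l] v)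
    (htw : t ~[l] w) : u + t ~[l] v + w := by
  have hv' : v =ᶠ[l] fun x => max (v x) 0 := hv.mono fun x hx => (max_eq_left hx).symm
  have hw' : w =ᶠ[l] fun x => max (w x) 0 := hw.mono fun x hx => (max_eq_left hx).symm
  exact ((huv.congr_right hv').add_add_of_nonneg (fun x => le_max_right _ _)
    (fun x => le_max_right _ _) (htw.congr_right hw')).congr_right (hv'.symm.add hw'.symm)

lemma tendsto_mul_add_atTop {a : ℝ} (ha : 0 < a) (b : ℝ) :
    Tendsto (fun s => a * s + b) atTop atTop :=
  tendsto_atTop_add_const_right _ b (tendsto_id.const_mul_atTop ha)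

lemma mul_add_isEquivalent {a : ℝ} (ha : a ≠ 0) (b : ℝ) :
    (fun s => a * s + b) ~[atTop] fun s => a * s :=
  IsEquivalent.refl.add_isLittleO ((isLittleO_const_id_atTop b).const_mul_right ha)

lemma stdNormalTail_mul_add_isEquivalent {a : ℝ} (ha : 0 < a) (b : ℝ) :
    (fun s => stdNormalTail (a * s + b)) ~[atTop] fun s => stdNormalPDF (a * s + b) / (a * s) :=
  (stdNormalTail_isEquivalent.comp_tendsto (tendsto_mul_add_atTop ha b)).trans
    (IsEquivalent.refl.div (mul_add_isEquivalent ha.ne' b))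

lemma stdNormalPDF_div_stdNormalPDF (u v : ℝ) :
    stdNormalPDF u / stdNormalPDF v = exp (-((u - v) * (u + v)) / 2) := by
  rw [stdNormalPDF, stdNormalPDF, div_div_div_cancel_right₀ (by positivity), ← exp_sub]
  ring_nf

lemma tendsto_stdNormalPDF_mul_add_div {a a' : ℝ} (ha' : 0 < a') (h : a' < a) (b b' : ℝ) :
    Tendsto (fun s => stdNormalPDF (a * s + b) / stdNormalPDF (a' * s + b')) atTop (𝓝 0) := by
  have hsub := tendsto_mul_add_atTop (sub_pos.2 h) (b - b')
  have hadd := tendsto_mul_add_atTop (add_pos (ha'.trans h) ha') (b + b')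
  have hprod := (hsub.atTop_mul_atTop₀ hadd).atTop_div_const two_pos
  refine (tendsto_exp_atBot.comp (tendsto_neg_atTop_atBot.comp hprod)).congr fun s => ?_
  simp only [Function.comp, stdNormalPDF_div_stdNormalPDF]
  ring_nf

lemma tendsto_mul_add_mul_div_div_add_div {ι : Type*} {l : Filter ι} {α β : ℝ} (hα : 0 < α)
    (hβ : 0 < β) {A B : ι → ℝ} (hA : ∀ᶠ i in l, 0 < A i) (hB : ∀ᶠ i in l, 0 < B i)
    (hAB : α < β → Tendsto (fun i => B i / A i) l (𝓝 0))
    (hBA : β < α → Tendsto (fun i => A i / B i) l (𝓝 0)) :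
    Tendsto (fun i => (α * A i + β * B i) / (A i / α + B i / β)) l
      (𝓝 (min (α ^ 2) (β ^ 2))) := by
  wlog h : α ≤ β generalizing α β A B
  · rw [min_comm]
    refine (this hβ hα hB hA hBA hAB (le_of_not_ge h)).congr fun i => ?_
    rw [add_comm (β * B i), add_comm (B i / β)]
  rw [min_eq_left (pow_le_pow_left₀ hα.le h 2)]
  rcases h.eq_or_lt with rfl | hlt
  · refine tendsto_const_nhds.congr' ?_
    filter_upwards [hA, hB] with i hAi hBi
    field_simp
  · have hr := hAB hlt
    have hlim := (tendsto_const_nhds (x := α)).add (hr.const_mul β) |>.div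
      ((tendsto_const_nhds (x := α⁻¹)).add (hr.div_const β)) (by positivity)
    rw [mul_zero, zero_div, add_zero, add_zero, div_inv_eq_mul, ← sq] at hlim
    refine hlim.congr' ?_
    filter_upwards [hA] with i hAi
    simp only [Pi.div_apply]
    field_simp

lemma tendsto_two_tail_ratio {a a' : ℝ} (ha : 0 < a) (ha' : 0 < a') (b b' : ℝ) :
    Tendsto (fun s => (a * stdNormalPDF (a * s + b) + a' * stdNormalPDF (a' * s + b')) /
      (s * (stdNormalTail (a * s + b) + stdNormalTail (a' * s + b')))) atTop
      (𝓝 (min (a ^ 2) (a' ^ 2))) := by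
  set A := fun s => stdNormalPDF (a * s + b)
  set B := fun s => stdNormalPDF (a' * s + b')
  have hden : (fun s => s * (stdNormalTail (a * s + b) + stdNormalTail (a' * s + b')))
      ~[atTop] fun s => A s / a + B s / a' := by
    have hsum := (stdNormalTail_mul_add_isEquivalent ha b).add_add_of_eventually_nonneg
      ((eventually_gt_atTop 0).mono fun s hs => div_nonneg (stdNormalPDF_pos _).le (by positivity))
      ((eventually_gt_atTop 0).mono fun s hs => div_nonneg (stdNormalPDF_pos _).le (by positivity))
      (stdNormalTail_mul_add_isEquivalent ha' b')
    refine (IsEquivalent.refl.mul hsum).congr_right ?_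
    filter_upwards [eventually_ne_atTop 0] with s hs
    simp only [Pi.mul_apply, Pi.add_apply, A, B]
    field_simp
  have hweighted := tendsto_mul_add_mul_div_div_add_div ha ha'
    (Eventually.of_forall fun s => stdNormalPDF_pos (a * s + b))
    (Eventually.of_forall fun s => stdNormalPDF_pos (a' * s + b'))
    (fun h => tendsto_stdNormalPDF_mul_add_div ha h b' b)
    (fun h => tendsto_stdNormalPDF_mul_add_div ha' h b b')
  exact (IsEquivalent.refl.div hden).symm.tendsto_nhds hweighted

lemma hasDerivAt_logit_s3 {x : ℝ} (h0 : 0 < x) (h1 : x < 1) :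
    HasDerivAt logit (1 / (x * (1 - x))) x := by
  have h := (hasDerivAt_log h0.ne').sub ((hasDerivAt_log (sub_pos.2 h1).ne').comp x
    ((hasDerivAt_id x).const_sub 1))
  refine h.congr_deriv ?_
  field_simp [(sub_pos.2 h1).ne']
  ring

lemma hasDerivAt_stdNormalCDF_mul_sqrt_add {n : ℝ} (hn : 0 < n) (a b : ℝ) :
    HasDerivAt (fun n => stdNormalCDF (a * √n + b))
      (a * stdNormalPDF (a * √n + b) / (2 * √n)) n :=
  ((hasDerivAt_stdNormalCDF _).comp n (((hasDerivAt_sqrt hn.ne').const_mul a).add_const b))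
    |>.congr_deriv (by ring)

lemma one_sub_stdNormalCDF_sub_stdNormalCDF (x y : ℝ) :
    1 - (stdNormalCDF x - stdNormalCDF y) = stdNormalTail x + stdNormalTail (-y) := by
  rw [← stdNormalCDF_eq_stdNormalTail_neg, ← stdNormalCDF_add_stdNormalTail x]
  ring

lemma tendsto_stdNormalCDF_sub_stdNormalCDF {aU aL : ℝ} (haU : 0 < aU) (haL : aL < 0)
    (bU bL : ℝ) :
    Tendsto (fun s => stdNormalCDF (aU * s + bU) - stdNormalCDF (aL * s + bL)) atTop (𝓝 1) := by
  have h := (tendsto_const_nhds (x := (1 : ℝ))).sub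
    ((tendsto_stdNormalTail_atTop.comp (tendsto_mul_add_atTop haU bU)).add
      (tendsto_stdNormalTail_atTop.comp (tendsto_mul_add_atTop (neg_pos.2 haL) (-bL))))
  rw [add_zero, sub_zero] at h
  refine h.congr fun s => ?_
  rw [Function.comp_apply, Function.comp_apply, neg_mul, ← neg_add,
    ← one_sub_stdNormalCDF_sub_stdNormalCDF]
  ring

theorem stmt_3 (aU aL bU bL : ℝ) (haU : 0 < aU) (haL : aL < 0) :
    Tendsto (fun n : ℝ => deriv (fun n : ℝ =>
        logit (stdNormalCDF (aU * Real.sqrt n + bU) - stdNormalCDF (aL * Real.sqrt n + bL))) n)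
      atTop (nhds (min (aU ^ 2) (aL ^ 2) / 2)) := by
  set P := fun n : ℝ => stdNormalCDF (aU * √n + bU) - stdNormalCDF (aL * √n + bL)
  have hcompl (n : ℝ) :
      1 - P n = stdNormalTail (aU * √n + bU) + stdNormalTail (-aL * √n + -bL) := by
    rw [one_sub_stdNormalCDF_sub_stdNormalCDF]; ring_nf
  have hP : Tendsto P atTop (𝓝 1) :=
    (tendsto_stdNormalCDF_sub_stdNormalCDF haU haL bU bL).comp tendsto_sqrt_atTop
  have hF := (tendsto_two_tail_ratio haU (neg_pos.2 haL) bU (-bL)).comp tendsto_sqrt_atTop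
  rw [neg_sq] at hF
  have hlim := (hF.div_const 2).div hP one_ne_zero
  rw [div_one] at hlim
  refine hlim.congr' ?_
  filter_upwards [eventually_gt_atTop 0, hP.eventually (eventually_gt_nhds one_pos)] with n hn hPn
  have hP1 : P n < 1 := by
    have := hcompl n
    linarith [stdNormalTail_pos (aU * √n + bU), stdNormalTail_pos (-aL * √n + -bL)]
  show _ = deriv (logit ∘ P) n
  rw [((hasDerivAt_logit_s3 hPn hP1).comp n ((hasDerivAt_stdNormalCDF_mul_sqrt_add hn aU bU).sub
    (hasDerivAt_stdNormalCDF_mul_sqrt_add hn aL bL))).deriv]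
  have hpdf : stdNormalPDF (-aL * √n + -bL) = stdNormalPDF (aL * √n + bL) := by
    rw [← stdNormalPDF_neg]; ring_nf
  simp only [Function.comp_apply, Pi.div_apply, ← hcompl, hpdf]
  field_simp [(sub_pos.2 hP1).ne']
  ring
end
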